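/- arXiv:2203.14131 — 3 statements merged into one kernel-verified Lean document; each statement's English description precedes it below -/
import Mathlib

section
/- Let p be a prime and let E/F be a weakly ramified finite Galois extension of p-adic fields of odd degree, with Galois group Γ, inertia subgroup Δ = Γ₀ and first ramification group Γ₁. Then Δ is abelian if and only if it is either a p-group (in which case Δ = Γ₁) or cyclic and of order prime to p. -/
/-- The `i`-th ramification group (in the lower numbering, for `i ≥ 0`) of a Galois extension
`E/F` of `p`-adic fields, viewed as a subset of the Galois group: it consists of those
automorphisms `σ` with `v_E(σ x - x) ≥ i + 1` for all `x` in the ring of integers `O_E`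
(the integral closure of `ℤ_p` in `E`), i.e. `σ x - x ∈ 𝔪_E ^ (i + 1)` for all `x ∈ O_E`.
In particular `ramificationSet p F E 0` is the inertia subgroup `Δ = Γ₀`. -/
def ramificationSet (p : ℕ) [Fact p.Prime] (F E : Type) [Field F] [Field E]
    [Algebra ℤ_[p] E] [Algebra F E] [IsLocalRing (integralClosure ℤ_[p] E)] (i : ℕ) :
    Set (E ≃ₐ[F] E) :=
  {σ | ∀ x : integralClosure ℤ_[p] E,
    ∃ y : integralClosure ℤ_[p] E,
      y ∈ (IsLocalRing.maximalIdeal (integralClosure ℤ_[p] E)) ^ (i + 1) ∧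
      (y : E) = σ (x : E) - (x : E)}


/-!
Fix a uniformizer `ϖ` of `O_E`. Because the residue field `k` is perfect of characteristic `p`,
every `x ∈ O_E` is `y ^ p + ϖ c`, so an element `σ ∈ Γᵢ` lies in `Γᵢ₊₁` as soon as
`σ ϖ ≡ ϖ` modulo `𝔪 ^ (i + 2)`. From this, `[Γ₁, Γ₁] ⊆ Γ₂` and `σ ^ p ∈ Γ₂` for `σ ∈ Γ₁`, so
when `Γ₂ = 1` the group `Γ₁` is an abelian `p`-group, and `θ₀(σ) = σ ϖ / ϖ mod 𝔪` is a character
`Γ₀ → k` with kernel `Γ₁`. If `Γ₁ = 1`, then `θ₀` embeds `Γ₀` into `kˣ`, which makes it cyclic of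
order prime to `p`. If `Γ₁ ≠ 1` and `Γ₀` is abelian, pick `1 ≠ τ ∈ Γ₁`, so `τ ϖ = ϖ + ϖ² c` with
`c` a unit; comparing `σ τ ϖ` with `τ σ ϖ` modulo `𝔪³` gives `θ₀(σ) = 1`, hence `Γ₀ = Γ₁`.
-/

open IsLocalRing
open scoped commutatorElement

lemma Ideal.add_pow_prime_sub_pow_mem {R : Type*} [CommRing R] {I : Ideal R} {p : ℕ}
    (hp : p.Prime) (hpI : (p : R) ∈ I) (y : R) {d : R} {k : ℕ} (hd : d ∈ I ^ (k + 1)) :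
    (y + d) ^ p - y ^ p ∈ I ^ (k + 2) := by
  obtain ⟨r, hr⟩ := exists_add_pow_prime_eq hp y d
  rw [hr, add_assoc, add_sub_cancel_left]
  refine add_mem ?_ ?_
  · have hdp := Ideal.pow_mem_pow hd p
    rw [← pow_mul] at hdp
    exact Ideal.pow_le_pow_right (by nlinarith [hp.two_le]) hdp
  · rw [show (p : R) * y * d * r = y * r * (p * d) by ring, pow_succ']
    exact Ideal.mul_mem_left _ _ (Ideal.mul_mem_mul hpI hd)

lemma coprime_card_of_injective_charP {H K : Type*} [Group H] [Finite H] [Field K]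
    (p : ℕ) [Fact p.Prime] [CharP K p] (f : H →* K) (hf : Function.Injective f) :
    (Nat.card H).Coprime p := by
  rw [Nat.coprime_comm, Nat.Prime.coprime_iff_not_dvd Fact.out]
  intro hp
  obtain ⟨g, hg⟩ := exists_prime_orderOf_dvd_card' p hp
  have hfg : f g = 1 := frobenius_inj K p (by simp [frobenius_def, ← map_pow, ← hg])
  rw [(injective_iff_map_eq_one f).mp hf g hfg, orderOf_one] at hg
  exact (Fact.out : p.Prime).one_lt.ne hg

lemma Subgroup.isCyclic_iff_exists_forall_eq_zpow {G : Type*} [Group G] (H : Subgroup G) :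
    IsCyclic H ↔ ∃ g ∈ H, ∀ τ ∈ H, ∃ n : ℤ, τ = g ^ n := by
  rw [H.isCyclic_iff_exists_zpowers_eq_top]
  refine exists_congr fun g ↦ ⟨fun hg ↦ ⟨hg ▸ mem_zpowers g, fun τ hτ ↦ ?_⟩, fun ⟨hg, h⟩ ↦ ?_⟩
  · obtain ⟨n, rfl⟩ := mem_zpowers_iff.mp (hg ▸ hτ)
    exact ⟨n, rfl⟩
  · refine le_antisymm (zpowers_le.mpr hg) fun τ hτ ↦ ?_
    obtain ⟨n, rfl⟩ := h τ hτ
    exact zpow_mem (mem_zpowers g) n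

lemma smul_mul_sub_mul {R G : Type*} [CommRing R] [Group G] [MulSemiringAction G R] (σ : G)
    (x y : R) : σ • (x * y) - x * y = (σ • x - x) * σ • y + x * (σ • y - y) := by
  rw [smul_mul']; ring

abbrev ramificationGroup (G R : Type*) [Group G] [CommRing R] [IsLocalRing R]
    [MulSemiringAction G R] (i : ℕ) : Subgroup G :=
  (maximalIdeal R ^ (i + 1)).inertia G

section LocalRing

variable {R : Type*} [CommRing R] [IsLocalRing R] {G : Type*} [Group G] [MulSemiringAction G R]

local notation "𝔪" => maximalIdeal R
local notation "Γ" => ramificationGroup G R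

lemma ramificationGroup_antitone : Antitone Γ := fun _ _ hij _ hσ x ↦
  Ideal.pow_le_pow_right (by omega) (hσ x)

lemma smul_mem_maximalIdeal (g : G) {x : R} (hx : x ∈ 𝔪) : g • x ∈ 𝔪 := by
  rw [mem_maximalIdeal, mem_nonunits_iff] at hx ⊢
  rwa [← MulSemiringAction.toRingEquiv_apply_apply G R, isUnit_map_iff]

lemma smul_mem_maximalIdeal_pow (g : G) {x : R} {j : ℕ} (hx : x ∈ 𝔪 ^ j) : g • x ∈ 𝔪 ^ j := by
  have hle : (maximalIdeal R).map (MulSemiringAction.toRingHom G R g) ≤ 𝔪 :=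
    Ideal.map_le_iff_le_comap.mpr fun y hy ↦ smul_mem_maximalIdeal g hy
  have := Ideal.mem_map_of_mem (MulSemiringAction.toRingHom G R g) hx
  rw [Ideal.map_pow] at this
  exact Ideal.pow_right_mono hle j this

lemma smul_sub_mem_maximalIdeal_pow_add {i : ℕ} {σ : G} (hσ : σ ∈ Γ i) :
    ∀ {j : ℕ} {x : R}, x ∈ 𝔪 ^ j → σ • x - x ∈ 𝔪 ^ (i + j)
  | 0, x, _ => Ideal.pow_le_pow_right (Nat.le_succ i) (hσ x)
  | j + 1, x, hx => by
    rw [pow_succ] at hx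
    refine Submodule.mul_induction_on hx (fun y hy z hz ↦ ?_) (fun y z hy hz ↦ ?_)
    · rw [smul_mul_sub_mul]
      refine add_mem ?_ ?_
      · rw [← add_assoc, pow_succ]
        exact Ideal.mul_mem_mul (smul_sub_mem_maximalIdeal_pow_add hσ hy)
          (smul_mem_maximalIdeal σ hz)
      · rw [show i + (j + 1) = j + (i + 1) by omega, pow_add]
        exact Ideal.mul_mem_mul hy (hσ z)
    · rw [smul_add, add_sub_add_comm]
      exact add_mem hy hz

lemma commutator_ramificationGroup_le (i j : ℕ) : ⁅Γ i, Γ j⁆ ≤ Γ (i + j) := by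
  rw [Subgroup.commutator_le]
  intro σ hσ τ hτ x
  set y := σ⁻¹ • τ⁻¹ • x
  have hx : x = τ • σ • y := by simp only [y, smul_inv_smul]
  have key : ⁅σ, τ⁆ • x - x =
      (σ • (τ • y - y) - (τ • y - y)) - (τ • (σ • y - y) - (σ • y - y)) := by
    rw [hx, commutatorElement_def]
    simp only [mul_smul, inv_smul_smul, smul_sub]
    ring
  have hτσ := smul_sub_mem_maximalIdeal_pow_add hτ (hσ y)
  rw [← add_assoc, add_comm j] at hτσ
  rw [key]
  exact sub_mem (smul_sub_mem_maximalIdeal_pow_add hσ (hτ y)) hτσ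

lemma commute_of_mem_ramificationGroup_one (h₂ : Γ 2 = ⊥) {σ τ : G} (hσ : σ ∈ Γ 1)
    (hτ : τ ∈ Γ 1) : σ * τ = τ * σ := by
  have := commutator_ramificationGroup_le 1 1 (Subgroup.commutator_mem_commutator hσ hτ)
  rwa [h₂, Subgroup.mem_bot, commutatorElement_eq_one_iff_mul_comm] at this

lemma residue_smul_of_mem_ramificationGroup_zero {σ : G} (hσ : σ ∈ Γ 0) (x : R) :
    residue R (σ • x) = residue R x :=
  Ideal.Quotient.eq.mpr (by simpa using hσ x)

lemma natCast_mem_maximalIdeal (p : ℕ) [CharP (ResidueField R) p] : (p : R) ∈ 𝔪 := by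
  rw [← residue_eq_zero_iff, map_natCast, CharP.cast_eq_zero]

lemma exists_sub_pow_mem_maximalIdeal (p : ℕ) [Fact p.Prime] [CharP (ResidueField R) p]
    [PerfectRing (ResidueField R) p] (x : R) : ∃ y, x - y ^ p ∈ 𝔪 := by
  obtain ⟨w, hw⟩ := surjective_frobenius (ResidueField R) p (residue R x)
  obtain ⟨y, rfl⟩ := residue_surjective w
  refine ⟨y, ?_⟩
  rw [← residue_eq_zero_iff, map_sub, map_pow, ← hw, frobenius_def, sub_self]

end LocalRing

section DiscreteValuationRing

variable {R : Type*} [CommRing R] [IsDomain R] [IsDiscreteValuationRing R]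
  {G : Type*} [Group G] [MulSemiringAction G R] {ϖ : R}

local notation "𝔪" => maximalIdeal R
local notation "Γ" => ramificationGroup G R

lemma mem_maximalIdeal_pow_iff_dvd (hϖ : Irreducible ϖ) {x : R} {j : ℕ} :
    x ∈ 𝔪 ^ j ↔ ϖ ^ j ∣ x := by
  rw [hϖ.maximalIdeal_eq, Ideal.span_singleton_pow, Ideal.mem_span_singleton]

lemma pow_mul_mem_maximalIdeal_pow_add_iff (hϖ : Irreducible ϖ) {n k : ℕ} {y : R} :
    ϖ ^ n * y ∈ 𝔪 ^ (n + k) ↔ y ∈ 𝔪 ^ k := by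
  rw [mem_maximalIdeal_pow_iff_dvd hϖ, mem_maximalIdeal_pow_iff_dvd hϖ, pow_add,
    mul_dvd_mul_iff_left (pow_ne_zero n hϖ.ne_zero)]

lemma uniformizer_mul_mem_maximalIdeal_pow_succ_iff (hϖ : Irreducible ϖ) {k : ℕ} {y : R} :
    ϖ * y ∈ 𝔪 ^ (k + 1) ↔ y ∈ 𝔪 ^ k := by
  simpa [add_comm] using pow_mul_mem_maximalIdeal_pow_add_iff hϖ (n := 1) (k := k) (y := y)

lemma uniformizer_dvd_smul (hϖ : Irreducible ϖ) (σ : G) : ϖ ∣ σ • ϖ := by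
  rw [← Ideal.mem_span_singleton, ← hϖ.maximalIdeal_eq]
  exact smul_mem_maximalIdeal σ ((mem_maximalIdeal ϖ).mpr hϖ.not_isUnit)

noncomputable def uniformizerRatio (hϖ : Irreducible ϖ) (σ : G) : R :=
  (uniformizer_dvd_smul hϖ σ).choose

lemma smul_uniformizer (hϖ : Irreducible ϖ) (σ : G) : σ • ϖ = ϖ * uniformizerRatio hϖ σ :=
  (uniformizer_dvd_smul hϖ σ).choose_spec

lemma uniformizerRatio_mul (hϖ : Irreducible ϖ) (σ τ : G) :
    uniformizerRatio hϖ (σ * τ) = σ • uniformizerRatio hϖ τ * uniformizerRatio hϖ σ := by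
  refine mul_left_cancel₀ hϖ.ne_zero ?_
  rw [← smul_uniformizer hϖ, mul_smul, smul_uniformizer hϖ τ, smul_mul', smul_uniformizer hϖ]
  ring

lemma uniformizerRatio_one (hϖ : Irreducible ϖ) : uniformizerRatio hϖ (1 : G) = 1 :=
  mul_left_cancel₀ hϖ.ne_zero (by rw [← smul_uniformizer, one_smul, mul_one])

lemma uniformizerRatio_not_mem (hϖ : Irreducible ϖ) (σ : G) : uniformizerRatio hϖ σ ∉ 𝔪 := by
  intro hu
  have h : σ • ϖ ∈ 𝔪 ^ (1 + 1) := by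
    rwa [smul_uniformizer hϖ, uniformizer_mul_mem_maximalIdeal_pow_succ_iff hϖ, pow_one]
  have := smul_mem_maximalIdeal_pow σ⁻¹ h
  rw [inv_smul_smul, ← mul_one ϖ, uniformizer_mul_mem_maximalIdeal_pow_succ_iff hϖ,
    pow_one] at this
  exact (mem_maximalIdeal 1).mp this isUnit_one

lemma smul_uniformizer_sub_mem_iff (hϖ : Irreducible ϖ) (σ : G) {k : ℕ} :
    σ • ϖ - ϖ ∈ 𝔪 ^ (k + 1) ↔ uniformizerRatio hϖ σ - 1 ∈ 𝔪 ^ k := by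
  rw [smul_uniformizer hϖ, ← mul_sub_one, uniformizer_mul_mem_maximalIdeal_pow_succ_iff hϖ]

variable (G) in
/-- Serre's `θ₀ : Γ₀ → k`, `σ ↦ σ ϖ / ϖ mod 𝔪`. -/
noncomputable def inertiaCharacter (hϖ : Irreducible ϖ) : Γ 0 →* ResidueField R where
  toFun σ := residue R (uniformizerRatio hϖ (σ : G))
  map_one' := by simp [uniformizerRatio_one]
  map_mul' σ τ := by
    simp [uniformizerRatio_mul, residue_smul_of_mem_ramificationGroup_zero σ.2, mul_comm]

section PerfectResidueField

variable (p : ℕ) [Fact p.Prime] [CharP (ResidueField R) p] [PerfectRing (ResidueField R) p]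
include p

lemma mem_ramificationGroup_succ_iff (hϖ : Irreducible ϖ) {i : ℕ} {σ : G} (hσ : σ ∈ Γ i) :
    σ ∈ Γ (i + 1) ↔ σ • ϖ - ϖ ∈ 𝔪 ^ (i + 2) := by
  refine ⟨fun h ↦ h ϖ, fun h x ↦ ?_⟩
  obtain ⟨y, hy⟩ := exists_sub_pow_mem_maximalIdeal p x
  obtain ⟨c, hc⟩ := (mem_maximalIdeal_pow_iff_dvd hϖ (j := 1)).mp (by simpa using hy)
  have hx : x = y ^ p + ϖ * c := by linear_combination hc
  have hσy : σ • y ^ p - y ^ p = (y + (σ • y - y)) ^ p - y ^ p := by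
    rw [smul_pow', add_sub_cancel]
  change σ • x - x ∈ 𝔪 ^ (i + 2)
  rw [hx, smul_add, add_sub_add_comm, hσy, smul_mul_sub_mul]
  refine add_mem (Ideal.add_pow_prime_sub_pow_mem Fact.out (natCast_mem_maximalIdeal p) y (hσ y))
    (add_mem (Ideal.mul_mem_right _ _ h) ?_)
  rw [pow_succ']
  exact Ideal.mul_mem_mul ((mem_maximalIdeal ϖ).mpr hϖ.not_isUnit) (hσ c)

lemma pow_mem_ramificationGroup_add_two {i : ℕ} {σ : G} (hσ : σ ∈ Γ (i + 1)) :
    σ ^ p ∈ Γ (i + 2) := by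
  obtain ⟨ϖ, hϖ⟩ := IsDiscreteValuationRing.exists_irreducible R
  set δ := σ • ϖ - ϖ
  have hδ : δ ∈ 𝔪 ^ (i + 2) := hσ ϖ
  have hpow (k : ℕ) : σ ^ k • ϖ - ϖ - k * δ ∈ 𝔪 ^ (i + 3) := by
    induction k with
    | zero => simp
    | succ k ih =>
      have hk : σ • (k : R) = k := map_natCast (MulSemiringAction.toRingHom G R σ) k
      have key : σ ^ (k + 1) • ϖ - ϖ - (k + 1 : ℕ) * δ =
          σ • (σ ^ k • ϖ - ϖ - k * δ) + k * (σ • δ - δ) := by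
        simp only [pow_succ', mul_smul, smul_sub, smul_mul', hk]
        push_cast
        ring
      rw [key]
      refine add_mem (smul_mem_maximalIdeal_pow σ ih) (Ideal.mul_mem_left _ _ ?_)
      exact Ideal.pow_le_pow_right (by omega) (smul_sub_mem_maximalIdeal_pow_add hσ hδ)
  have hpδ : (p : R) * δ ∈ 𝔪 ^ (i + 3) := by
    rw [pow_succ']
    exact Ideal.mul_mem_mul (natCast_mem_maximalIdeal p) hδ
  rw [mem_ramificationGroup_succ_iff p hϖ (pow_mem hσ p)]
  simpa using add_mem (hpow p) hpδ

lemma isPGroup_ramificationGroup_one (h₂ : Γ 2 = ⊥) : IsPGroup p (Γ 1) := fun σ ↦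
  ⟨1, Subtype.ext <| by simpa [h₂] using pow_mem_ramificationGroup_add_two p (i := 0) σ.2⟩

lemma inertiaCharacter_eq_one_iff (hϖ : Irreducible ϖ) (σ : Γ 0) :
    inertiaCharacter G hϖ σ = 1 ↔ (σ : G) ∈ Γ 1 := by
  rw [mem_ramificationGroup_succ_iff p hϖ σ.2, smul_uniformizer_sub_mem_iff, pow_one,
    ← residue_eq_zero_iff, map_sub, map_one, sub_eq_zero]
  rfl

lemma isCyclic_and_coprime_of_ramificationGroup_one_eq_bot [Finite G] (h₁ : Γ 1 = ⊥) :
    IsCyclic (Γ 0) ∧ (Nat.card (Γ 0)).Coprime p := by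
  obtain ⟨ϖ, hϖ⟩ := IsDiscreteValuationRing.exists_irreducible R
  have hinj : Function.Injective (inertiaCharacter G hϖ) :=
    (injective_iff_map_eq_one _).mpr fun σ hσ ↦ Subtype.ext <| by
      simpa [h₁] using (inertiaCharacter_eq_one_iff p hϖ σ).mp hσ
  exact ⟨isCyclic_of_injective_ringHom _ hinj, coprime_card_of_injective_charP p _ hinj⟩

lemma mem_ramificationGroup_one_of_commute {σ τ : G} (hσ : σ ∈ Γ 0) (hτ : τ ∈ Γ 1)
    (hτ₂ : τ ∉ Γ 2) (hστ : σ * τ = τ * σ) : σ ∈ Γ 1 := by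
  obtain ⟨ϖ, hϖ⟩ := IsDiscreteValuationRing.exists_irreducible R
  rw [← inertiaCharacter_eq_one_iff p hϖ ⟨σ, hσ⟩]
  set u := uniformizerRatio hϖ σ
  change residue R u = 1
  obtain ⟨c, hc⟩ := (mem_maximalIdeal_pow_iff_dvd hϖ).mp (hτ ϖ)
  have hc𝔪 : c ∉ 𝔪 := fun h ↦ hτ₂ <| (mem_ramificationGroup_succ_iff p hϖ hτ).mpr <| by
    rw [hc]
    exact (pow_mul_mem_maximalIdeal_pow_add_iff hϖ (k := 1)).mpr (by simpa using h)
  -- compare `σ (τ ϖ)` with `τ (σ ϖ)`, where `τ ϖ = ϖ + ϖ² c` and `σ ϖ = ϖ u`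
  have key : ϖ ^ 2 * (u ^ 2 * σ • c - c * τ • u) = ϖ * (τ • u - u) := by
    have hτϖ : τ • ϖ = ϖ + ϖ ^ (1 + 1) * c := by linear_combination hc
    have h := congrArg (· • ϖ) hστ
    simp only [mul_smul, hτϖ, smul_add, smul_mul', smul_pow', smul_uniformizer hϖ σ] at h
    linear_combination h
  have hmem : u ^ 2 * σ • c - c * τ • u ∈ 𝔪 ^ 1 := by
    rw [← pow_mul_mem_maximalIdeal_pow_add_iff hϖ (n := 2), key,
      uniformizer_mul_mem_maximalIdeal_pow_succ_iff hϖ]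
    exact hτ u
  rw [pow_one, ← residue_eq_zero_iff, map_sub, map_mul, map_mul, map_pow,
    residue_smul_of_mem_ramificationGroup_zero hσ,
    residue_smul_of_mem_ramificationGroup_zero (ramificationGroup_antitone (Nat.zero_le 1) hτ)]
    at hmem
  have hu : residue R u ≠ 0 := by
    rw [Ne, residue_eq_zero_iff]
    exact uniformizerRatio_not_mem hϖ σ
  have hc : residue R c ≠ 0 := by rwa [Ne, residue_eq_zero_iff]
  have : residue R c * residue R u * (residue R u - 1) = 0 := by linear_combination hmem
  simpa [hu, hc, sub_eq_zero] using this

lemma ramificationGroup_zero_eq_one_of_commute (h₁ : Γ 1 ≠ ⊥) (h₂ : Γ 2 = ⊥)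
    (hcomm : ∀ σ ∈ Γ 0, ∀ τ ∈ Γ 0, σ * τ = τ * σ) : Γ 0 = Γ 1 := by
  obtain ⟨⟨τ, hτ⟩, hτ1⟩ := Subgroup.ne_bot_iff_exists_ne_one.mp h₁
  have hτ₂ : τ ∉ Γ 2 := by
    rw [h₂, Subgroup.mem_bot]
    exact fun h ↦ hτ1 (Subtype.ext h)
  refine le_antisymm (fun σ hσ ↦ ?_) (ramificationGroup_antitone (Nat.zero_le 1))
  exact mem_ramificationGroup_one_of_commute p hσ hτ hτ₂
    (hcomm σ hσ τ (ramificationGroup_antitone (Nat.zero_le 1) hτ))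

theorem ramificationGroup_zero_commutative_iff [Finite G] (h₂ : Γ 2 = ⊥) :
    (∀ σ ∈ Γ 0, ∀ τ ∈ Γ 0, σ * τ = τ * σ) ↔
      (IsPGroup p (Γ 0) ∧ Γ 0 = Γ 1) ∨ (IsCyclic (Γ 0) ∧ (Nat.card (Γ 0)).Coprime p) := by
  refine ⟨fun hcomm ↦ ?_, ?_⟩
  · by_cases h₁ : Γ 1 = ⊥
    · exact .inr (isCyclic_and_coprime_of_ramificationGroup_one_eq_bot p h₁)
    · have h₀₁ := ramificationGroup_zero_eq_one_of_commute p h₁ h₂ hcomm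
      exact .inl ⟨h₀₁ ▸ isPGroup_ramificationGroup_one p h₂, h₀₁⟩
  · rintro (⟨-, h₀₁⟩ | ⟨hcyc, -⟩) σ hσ τ hτ
    · rw [h₀₁] at hσ hτ
      exact commute_of_mem_ramificationGroup_one h₂ hσ hτ
    · exact congrArg Subtype.val (hcyc.commGroup.mul_comm ⟨σ, hσ⟩ ⟨τ, hτ⟩)

end PerfectResidueField

end DiscreteValuationRing

section PAdic

variable (p : ℕ) [Fact p.Prime] (E : Type) [Field E] [Algebra ℚ_[p] E]
  [Algebra ℤ_[p] E] [IsScalarTower ℤ_[p] ℚ_[p] E]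

local notation "𝒪" => integralClosure ℤ_[p] E

lemma algebraMap_padicInt_integralClosure_injective :
    Function.Injective (algebraMap ℤ_[p] 𝒪) := by
  refine .of_comp (f := algebraMap 𝒪 E) ?_
  rw [← RingHom.coe_comp, ← IsScalarTower.algebraMap_eq,
    IsScalarTower.algebraMap_eq ℤ_[p] ℚ_[p] E, RingHom.coe_comp]
  exact (algebraMap ℚ_[p] E).injective.comp (IsFractionRing.injective ℤ_[p] ℚ_[p])

instance : IsLocalHom (algebraMap ℤ_[p] 𝒪) :=
  (algebraMap_isIntegral_iff.mpr inferInstance).isLocalHom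
    (algebraMap_padicInt_integralClosure_injective p E)

variable [IsLocalRing (integralClosure ℤ_[p] E)]

instance : CharP (ResidueField 𝒪) p := by
  rw [CharP.charP_iff_prime_eq_zero Fact.out, ← map_natCast (residue 𝒪), residue_eq_zero_iff,
    ← map_natCast (algebraMap ℤ_[p] 𝒪), mem_maximalIdeal, mem_nonunits_iff]
  refine fun h ↦ (mem_maximalIdeal _).mp ?_ (isUnit_of_map_unit _ _ h)
  rw [PadicInt.maximalIdeal_eq_span_p]
  exact Ideal.mem_span_singleton_self _

variable [FiniteDimensional ℚ_[p] E]

instance : IsDiscreteValuationRing 𝒪 :=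
  have := integralClosure.isDedekindDomain ℤ_[p] ℚ_[p] E
  have hnf : ¬IsField 𝒪 := fun h ↦ IsDiscreteValuationRing.not_isField ℤ_[p]
    (isField_of_isIntegral_of_isField (algebraMap_padicInt_integralClosure_injective p E) h)
  ((IsDiscreteValuationRing.TFAE 𝒪 hnf).out 2 0).mp this

instance : Finite (ResidueField 𝒪) :=
  have := IsIntegralClosure.finite ℤ_[p] ℚ_[p] E 𝒪
  ResidueField.finite_of_finite (R := ℤ_[p]) (.of_equiv _ PadicInt.residueField.symm.toEquiv)

end PAdic

section Galois

variable (p : ℕ) [Fact p.Prime] (F E : Type) [Field F] [Field E] [Algebra ℚ_[p] F]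
  [Algebra ℚ_[p] E] [Algebra ℤ_[p] E] [IsScalarTower ℤ_[p] ℚ_[p] E] [Algebra F E]
  [IsScalarTower ℚ_[p] F E] [FiniteDimensional ℚ_[p] E]

noncomputable instance : MulSemiringAction (E ≃ₐ[F] E) (integralClosure ℤ_[p] E) :=
  MulSemiringAction.compHom _
    ((galRestrict ℤ_[p] ℚ_[p] E (integralClosure ℤ_[p] E)).toMonoidHom.comp
      (AlgEquiv.restrictScalarsHom ℚ_[p]))

variable {p F E} in
lemma coe_algEquiv_smul (σ : E ≃ₐ[F] E) (x : integralClosure ℤ_[p] E) :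
    ((σ • x : integralClosure ℤ_[p] E) : E) = σ x :=
  algebraMap_galRestrict_apply ℤ_[p] (σ.restrictScalars ℚ_[p]) x

lemma ramificationSet_eq [IsLocalRing (integralClosure ℤ_[p] E)] (i : ℕ) :
    ramificationSet p F E i = ramificationGroup (E ≃ₐ[F] E) (integralClosure ℤ_[p] E) i := by
  ext σ
  refine forall_congr' fun x ↦ ⟨fun ⟨y, hy, hyx⟩ ↦ ?_, fun h ↦ ⟨_, h, ?_⟩⟩
  · obtain rfl : y = σ • x - x := Subtype.ext (by simp [hyx, coe_algEquiv_smul])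
    exact hy
  · simp [coe_algEquiv_smul]

end Galois

theorem inertia_abelian_iff_of_weaklyRamified_general
    (p : ℕ) [Fact p.Prime] (F E : Type) [Field F] [Field E]
    [Algebra ℚ_[p] F]
    [Algebra ℚ_[p] E] [FiniteDimensional ℚ_[p] E]
    [Algebra ℤ_[p] E] [IsScalarTower ℤ_[p] ℚ_[p] E]
    [Algebra F E] [IsScalarTower ℚ_[p] F E]
    [FiniteDimensional F E]
    [IsLocalRing (integralClosure ℤ_[p] E)]
    (hweak : ∀ σ ∈ ramificationSet p F E 2, σ = 1) :
    (∀ σ ∈ ramificationSet p F E 0, ∀ τ ∈ ramificationSet p F E 0, σ * τ = τ * σ) ↔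
      (((∃ k : ℕ, (ramificationSet p F E 0).ncard = p ^ k) ∧
          ramificationSet p F E 0 = ramificationSet p F E 1) ∨
        ((∃ g ∈ ramificationSet p F E 0,
            ∀ τ ∈ ramificationSet p F E 0, ∃ n : ℤ, τ = g ^ n) ∧
          Nat.Coprime (ramificationSet p F E 0).ncard p)) := by
  simp only [ramificationSet_eq, SetLike.mem_coe, SetLike.coe_set_eq, ← Nat.card_coe_set_eq,
    SetLike.coe_sort_coe, ← Subgroup.isCyclic_iff_exists_forall_eq_zpow, ← IsPGroup.iff_card]
    at hweak ⊢
  exact ramificationGroup_zero_commutative_iff p ((Subgroup.eq_bot_iff_forall _).mpr hweak)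

/-- If `E/F` is a weakly ramified finite Galois extension of `p`-adic fields
of odd degree, with inertia subgroup `Δ = Γ₀` and first ramification group `Γ₁`, then `Δ` is
abelian if and only if it is either a `p`-group (in which case `Δ = Γ₁`) or cyclic of order
prime to `p`. -/
theorem inertia_abelian_iff_of_weaklyRamified
    (p : ℕ) [Fact p.Prime] (F E : Type) [Field F] [Field E]
    [Algebra ℚ_[p] F] [FiniteDimensional ℚ_[p] F]
    [Algebra ℚ_[p] E] [FiniteDimensional ℚ_[p] E]
    [Algebra ℤ_[p] E] [IsScalarTower ℤ_[p] ℚ_[p] E]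
    [Algebra F E] [IsScalarTower ℚ_[p] F E]
    [FiniteDimensional F E] [IsGalois F E]
    [IsLocalRing (integralClosure ℤ_[p] E)]
    (hodd : Odd (Module.finrank F E))
    (hweak : ∀ σ ∈ ramificationSet p F E 2, σ = 1) :
    (∀ σ ∈ ramificationSet p F E 0, ∀ τ ∈ ramificationSet p F E 0, σ * τ = τ * σ) ↔
      (((∃ k : ℕ, (ramificationSet p F E 0).ncard = p ^ k) ∧
          ramificationSet p F E 0 = ramificationSet p F E 1) ∨
        ((∃ g ∈ ramificationSet p F E 0,
            ∀ τ ∈ ramificationSet p F E 0, ∃ n : ℤ, τ = g ^ n) ∧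
          Nat.Coprime (ramificationSet p F E 0).ncard p)) :=
  inertia_abelian_iff_of_weaklyRamified_general p F E hweak
end

section
/- Let p be a prime, let k be a field of characteristic p, let Γ be a finite p-group of order m, let ρ : Γ → GL_n(k) be a group homomorphism with n ≤ m, and let c : Γ → k be any function. Then ( Σ_{γ ∈ Γ} c(γ) · ρ(γ) )^m = ( Σ_{γ ∈ Γ} c(γ) )^m · I_n, where I_n is the n×n identity matrix. -/
/-!
Put `y = ∑ γ, c γ • γ` in the group algebra `k[Γ]` and `s = ∑ γ, c γ`, its augmentation.
For a `p`-group in characteristic `p` the augmentation ideal is nil: a nontrivial central `z`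
has `(z - 1) ^ p ^ e = z ^ p ^ e - 1 = 0`, the kernel of `k[Γ] → k[Γ ⧸ ⟨z⟩]` is the ideal
generated by the central element `z - 1`, and one inducts on `|Γ|`. So `y - s` is nilpotent,
hence so is its image `S - s • 1` under `ρ`, an `n × n` matrix, whose `m`-th power therefore
vanishes since `n ≤ m`. As `m` is a power of `p`, `S ^ m = (S - s • 1) ^ m + s ^ m • 1`.
-/

open Matrix

theorem Subgroup.normal_of_le_center {G : Type*} [Group G] {H : Subgroup G}
    (h : H ≤ center G) : H.Normal :=
  ⟨fun n hn g => by rwa [mem_center_iff.mp (h hn) g, mul_inv_cancel_right]⟩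

theorem sub_one_pow_char_pow_eq_zero {R : Type*} [Ring R] (p : ℕ) [Fact p.Prime] [CharP R p]
    {u : R} {e : ℕ} (hu : u ^ p ^ e = 1) : (u - 1) ^ p ^ e = 0 := by
  rw [sub_pow_char_pow_of_commute (p := p) (n := e) (Commute.one_right u), hu, one_pow, sub_self]

theorem Matrix.pow_eq_zero_of_isNilpotent {n R : Type*} [Fintype n] [DecidableEq n] [CommRing R]
    [IsDomain R] {M : Matrix n n R} (hM : IsNilpotent M) {m : ℕ} (hm : Fintype.card n ≤ m) :
    M ^ m = 0 := by
  have hchar : M.charpoly = Polynomial.X ^ Fintype.card n :=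
    sub_eq_zero.mp (isNilpotent_charpoly_sub_pow_of_isNilpotent hM).eq_zero
  have hcard : M ^ Fintype.card n = 0 := by
    simpa only [hchar, map_pow, Polynomial.aeval_X] using aeval_self_charpoly M
  rw [← Nat.add_sub_cancel' hm, pow_add, hcard, zero_mul]

namespace MonoidAlgebra

variable {k G : Type*} [CommRing k] [Group G]

variable (k G) in
noncomputable abbrev augmentation : MonoidAlgebra k G →ₐ[k] k := lift k k G 1

theorem augmentation_comp_mapDomainAlgHom {Q : Type*} [Group Q] (f : G →* Q) :
    (augmentation k Q).comp (mapDomainAlgHom k k f) = augmentation k G :=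
  algHom_ext (fun g => by simp) (AlgHom.ext fun r => by simp)

theorem algebraMap_augmentation [Subsingleton G] (x : MonoidAlgebra k G) :
    algebraMap k _ (augmentation k G x) = x := by
  have : (Algebra.ofId k _).comp (augmentation k G) = AlgHom.id k (MonoidAlgebra k G) :=
    algHom_ext (fun g => by simp [Subsingleton.elim g 1]) (AlgHom.ext fun r => by simp)
  exact DFunLike.congr_fun this x

theorem commute_of_mem_center {z : G} (hz : z ∈ Subgroup.center G) (a : MonoidAlgebra k G) :
    Commute (of k G z) a := by
  induction a using induction_on with
  | of g => exact (show Commute z g from (Subgroup.mem_center_iff.mp hz g).symm).map (of k G)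
  | add a b ha hb => exact ha.add_right hb
  | smul r a ha => exact ha.smul_right r

theorem of_sub_one_mem_span_of_mem_zpowers [Finite G] {z g : G}
    (hg : g ∈ Subgroup.zpowers z) : of k G g - 1 ∈ Ideal.span {of k G z - 1} := by
  obtain ⟨i, rfl⟩ := mem_powers_iff_mem_zpowers.mpr hg
  rw [map_pow, ← geom_sum_mul]
  exact Ideal.mul_mem_left _ _ (Ideal.mem_span_singleton_self _)

theorem mem_of_mapDomain_mk_eq_zero {H : Subgroup G} {I : Ideal (MonoidAlgebra k G)}
    (hI : ∀ h ∈ H, of k G h - 1 ∈ I) {x : MonoidAlgebra k G}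
    (hx : mapDomain (QuotientGroup.mk : G → G ⧸ H) x = 0) : x ∈ I := by
  -- `T` sends `g` to the representative `g * h` of its coset, and kills `x`.
  let T := mapDomainLinearMap k k ((Quotient.out : G ⧸ H → G) ∘ QuotientGroup.mk)
  have hT : T x = 0 := by
    simp only [T, mapDomainLinearMap_comp, LinearMap.comp_apply]
    show mapDomainLinearMap k k Quotient.out (mapDomain QuotientGroup.mk x) = 0
    rw [hx, map_zero]
  suffices ∀ y, y - T y ∈ I by simpa [hT] using this x
  intro y
  induction y using induction_linear with
  | zero => simp
  | add a b ha hb => simpa [add_sub_add_comm] using I.add_mem ha hb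
  | single g r =>
    obtain ⟨h, hh⟩ := QuotientGroup.mk_out_eq_mul H g
    have : single g r - single (g * h) r = -(single g r * (of k G h - 1)) := by
      simp [mul_sub, single_mul_single]
    simpa [T, hh, this] using I.neg_mem (I.mul_mem_left _ (hI h h.2))

theorem isNilpotent_of_isNilpotent_mapDomainAlgHom [Finite G] {z : G}
    (hz : z ∈ Subgroup.center G) [(Subgroup.zpowers z).Normal] (hu : IsNilpotent (of k G z - 1))
    {x : MonoidAlgebra k G}
    (hx : IsNilpotent (mapDomainAlgHom k k (QuotientGroup.mk' (Subgroup.zpowers z)) x)) :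
    IsNilpotent x := by
  obtain ⟨M, hM⟩ := hx
  obtain ⟨N, hN⟩ := hu
  have hxM : x ^ M ∈ Ideal.span {of k G z - 1} := by
    refine mem_of_mapDomain_mk_eq_zero (fun _ => of_sub_one_mem_span_of_mem_zpowers) ?_
    rw [← map_pow] at hM
    simpa using hM
  obtain ⟨a, ha⟩ := Ideal.mem_span_singleton'.mp hxM
  refine ⟨M * N, ?_⟩
  rw [pow_mul, ← ha, ((commute_of_mem_center hz a).sub_left (Commute.one_left a)).symm.mul_pow,
    hN, mul_zero]

end MonoidAlgebra

open MonoidAlgebra in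
theorem IsPGroup.isNilpotent_of_augmentation_eq_zero {p : ℕ} [Fact p.Prime] {k G : Type*}
    [CommRing k] [CharP k p] [Group G] [Finite G] (hG : IsPGroup p G) {x : MonoidAlgebra k G}
    (hx : augmentation k G x = 0) : IsNilpotent x := by
  induction h : Nat.card G using Nat.strong_induction_on generalizing G with
  | _ N ih =>
  rcases subsingleton_or_nontrivial G with hG1 | hG1
  · rw [← algebraMap_augmentation x, hx, map_zero]
    exact IsNilpotent.zero
  have := hG.center_nontrivial
  obtain ⟨⟨z, hz⟩, hz1⟩ := exists_ne (1 : Subgroup.center G)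
  have := Subgroup.normal_of_le_center (Subgroup.zpowers_le.mpr hz)
  have : CharP (MonoidAlgebra k G) p := charP_of_injective_algebraMap' k p
  obtain ⟨e, he⟩ := hG z
  refine isNilpotent_of_isNilpotent_mapDomainAlgHom hz
    ⟨p ^ e, sub_one_pow_char_pow_eq_zero p (by rw [← map_pow, he, map_one])⟩
    (ih _ ?_ (hG.to_quotient _) ?_ rfl)
  · rw [← h, Subgroup.card_eq_card_quotient_mul_card_subgroup (Subgroup.zpowers z)]
    refine lt_mul_of_one_lt_right Nat.card_pos ((Subgroup.one_lt_card_iff_ne_bot _).mpr ?_)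
    simpa using fun h => hz1 (Subtype.ext h)
  · rw [← AlgHom.comp_apply, augmentation_comp_mapDomainAlgHom, hx]

open MonoidAlgebra in
/-- For a finite `p`-group `Γ` of order `m`, a field `k` of characteristic `p`,
a representation `ρ : Γ → GL_n(k)` with `n ≤ m`, and any function `c : Γ → k`, one has
`(∑_γ c(γ) ρ(γ))^m = (∑_γ c(γ))^m · I_n`. -/
theorem pow_card_sum_smul_rep_of_pGroup
    (p n : ℕ) [Fact p.Prime] (k : Type) [Field k] [CharP k p]
    (Γ : Type) [Group Γ] [Fintype Γ] (hΓ : IsPGroup p Γ)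
    (m : ℕ) (hm : Fintype.card Γ = m) (hn : n ≤ m)
    (ρ : Γ →* GL (Fin n) k) (c : Γ → k) :
    (∑ γ : Γ, c γ • (ρ γ : Matrix (Fin n) (Fin n) k)) ^ m =
      (∑ γ : Γ, c γ) ^ m • (1 : Matrix (Fin n) (Fin n) k) := by
  obtain ⟨e, he⟩ := IsPGroup.iff_card.mp hΓ
  rw [Nat.card_eq_fintype_card, hm] at he
  subst he
  let y : MonoidAlgebra k Γ := ∑ γ, c γ • of k Γ γ
  let ψ := lift k (Matrix (Fin n) (Fin n) k) Γ ((Units.coeHom _).comp ρ)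
  have hψ : ψ y = ∑ γ : Γ, c γ • (ρ γ : Matrix (Fin n) (Fin n) k) := by simp [y, ψ]
  have hnil : IsNilpotent (y - algebraMap k _ (∑ γ, c γ)) :=
    hΓ.isNilpotent_of_augmentation_eq_zero (by simp [y])
  have : CharP (MonoidAlgebra k Γ) p := charP_of_injective_algebraMap' k p
  have hy : y ^ p ^ e =
      (y - algebraMap k _ (∑ γ, c γ)) ^ p ^ e + algebraMap k _ ((∑ γ, c γ) ^ p ^ e) := by
    rw [map_pow, ← add_pow_char_pow_of_commute (p := p) (n := e)
      (Algebra.commute_algebraMap_right _ _), sub_add_cancel]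
  rw [← hψ, ← map_pow, hy, map_add, map_pow,
    Matrix.pow_eq_zero_of_isNilpotent (hnil.map ψ) (by simpa using hn), zero_add,
    AlgHom.commutes, Algebra.algebraMap_eq_smul_one]
end

section
/- Let p be a prime, let F be a finite extension of ℚ_p whose residue field has exactly p elements (for instance, a totally ramified finite extension of ℚ_p), with valuation ring O and maximal ideal 𝔭. Let Γ be a finite p-group, let T : Γ → GL_n(O) be a group homomorphism, and let c : Γ → O be any function. Then det( Σ_{γ ∈ Γ} c(γ) · T(γ) ) ≡ ( Σ_{γ ∈ Γ} c(γ) )ⁿ (mod 𝔭). -/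
/-!
Reducing modulo `𝔭` turns `T` into a representation of the `p`-group `Γ` on `kⁿ`, where the
residue field `k` is finite of characteristic `p`. Such a representation is unipotent: counting
orbits, `Γ` fixes a nonzero vector of every nonzero finite `k`-space, so induction on the dimension
through the quotient by the invariants shows that `∑ c(γ) (T(γ) - 1)` is nilpotent. Hence
`∑ c(γ) T(γ)` is the scalar `∑ c(γ)` plus a nilpotent matrix, and its determinant is `(∑ c(γ))ⁿ`.
-/

open Module

namespace Module.End

variable {R M : Type*} [Ring R] [AddCommGroup M] [Module R M]

theorem isNilpotent_of_restrict_of_mapQ {f : End R M} {W : Submodule R M} (hW : W ≤ W.comap f)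
    (hrestrict : IsNilpotent (f.restrict hW)) (hquot : IsNilpotent (W.mapQ W f hW)) :
    IsNilpotent f := by
  obtain ⟨a, ha⟩ := hquot
  obtain ⟨b, hb⟩ := hrestrict
  refine ⟨b + a, LinearMap.ext fun v => ?_⟩
  have hmem : (f ^ a) v ∈ W := by
    have := congr($ha (Submodule.Quotient.mk v))
    rwa [← Submodule.mapQ_pow, Submodule.mapQ_apply, LinearMap.zero_apply,
      Submodule.Quotient.mk_eq_zero] at this
  have hvanish := congr(($hb ⟨_, hmem⟩ : M))
  rw [pow_restrict, LinearMap.restrict_apply] at hvanish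
  simpa [pow_add, Module.End.mul_apply] using hvanish

end Module.End

namespace Representation

variable {k G V : Type*} [Field k] [Group G] [AddCommGroup V] [Module k V]
  {p : ℕ} [Fact p.Prime] [Finite k] [CharP k p]

theorem invariants_ne_bot [FiniteDimensional k V] [Nontrivial V] (ρ : Representation k G V)
    (hG : IsPGroup p G) : ρ.invariants ≠ ⊥ := by
  let : MulAction G V := MulAction.compHom V ρ
  have : Finite V := Module.finite_of_finite k
  have hdvd : p ∣ Nat.card V := by
    have := Fintype.ofFinite k
    have := Fintype.ofFinite V
    rw [Nat.card_eq_fintype_card, card_eq_pow_finrank (K := k)]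
    exact dvd_pow ((CharP.cast_eq_zero_iff k p _).1 (Nat.cast_card_eq_zero k)) finrank_pos.ne'
  obtain ⟨v, hv, hne⟩ := hG.exists_fixed_point_of_prime_dvd_card_of_fixed_point V hdvd
    (a := 0) fun g => map_zero (ρ g)
  exact (Submodule.ne_bot_iff _).2 ⟨v, hv, hne.symm⟩

theorem isNilpotent_sum_smul_sub_one [Fintype G] [FiniteDimensional k V]
    (ρ : Representation k G V) (hG : IsPGroup p G) (c : G → k) :
    IsNilpotent (∑ g, c g • (ρ g - 1)) := by
  induction h : finrank k V using Nat.strong_induction_on generalizing V with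
  | _ m ih =>
  rcases subsingleton_or_nontrivial V with hV | hV
  · exact ⟨1, Subsingleton.elim _ _⟩
  set W := ρ.invariants
  have hW : ∀ g, W ≤ W.comap (ρ g) := fun g v hv => by
    simpa only [Submodule.mem_comap, (ρ.mem_invariants v).1 hv g] using hv
  have hfW : W ≤ W.comap (∑ g, c g • (ρ g - 1)) := fun v hv => by
    simp [(ρ.mem_invariants v).1 hv]
  have hdim : finrank k (V ⧸ W) < m := by
    have hW_pos : 0 < finrank k W :=
      finrank_pos_iff.2 (Submodule.nontrivial_iff_ne_bot.2 (ρ.invariants_ne_bot hG))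
    have := W.finrank_quotient_add_finrank
    omega
  refine Module.End.isNilpotent_of_restrict_of_mapQ hfW ⟨1, ?_⟩ ?_
  · ext ⟨v, hv⟩
    simp [(ρ.mem_invariants v).1 hv]
  · convert ih _ hdim (ρ.quotient W hW) rfl using 1
    ext v
    simp only [LinearMap.coe_comp, Function.comp_apply, Submodule.mkQ_apply, Submodule.mapQ_apply,
      LinearMap.coe_sum, LinearMap.coe_smul, Finset.sum_apply, Pi.smul_apply, LinearMap.sub_apply,
      End.one_apply, quotient_apply]
    simp only [← Submodule.mkQ_apply, map_sum, map_smul, map_sub]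

end Representation

namespace Matrix

variable {ι R : Type*} [Fintype ι] [DecidableEq ι]

theorem det_scalar_add_of_isNilpotent [CommRing R] [IsDomain R] (s : R) {N : Matrix ι ι R}
    (hN : IsNilpotent N) : (scalar ι s + N).det = s ^ Fintype.card ι := by
  have hcharpoly : (-N).charpoly = Polynomial.X ^ Fintype.card ι :=
    sub_eq_zero.1 (isNilpotent_charpoly_sub_pow_of_isNilpotent hN.neg).eq_zero
  rw [← sub_neg_eq_add, ← eval_charpoly, hcharpoly, Polynomial.eval_pow, Polynomial.eval_X]

variable {k G : Type*} [Field k] [Group G] [Fintype G] {p : ℕ} [Fact p.Prime] [Finite k] [CharP k p]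

theorem isNilpotent_sum_smul_sub_one (B : G →* Matrix ι ι k) (hG : IsPGroup p G) (c : G → k) :
    IsNilpotent (∑ g, c g • (B g - 1)) := by
  refine (IsNilpotent.map_iff (toLinAlgEquiv' (R := k) (n := ι)).injective).1 ?_
  simpa using Representation.isNilpotent_sum_smul_sub_one
    (toLinAlgEquiv'.toRingEquiv.toMonoidHom.comp B : Representation k G (ι → k)) hG c

theorem det_sum_smul_eq_pow_sum (B : G →* Matrix ι ι k) (hG : IsPGroup p G) (c : G → k) :
    (∑ g, c g • B g).det = (∑ g, c g) ^ Fintype.card ι := by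
  have hsplit : ∑ g, c g • B g = scalar ι (∑ g, c g) + ∑ g, c g • (B g - 1) := by
    simp [smul_sub, smul_one_eq_diagonal]
  rw [hsplit, det_scalar_add_of_isNilpotent _ (isNilpotent_sum_smul_sub_one B hG c)]

end Matrix

namespace IsLocalRing

variable {R ι G : Type*} [CommRing R] [IsLocalRing R] [Fintype ι] [DecidableEq ι]
  [Group G] [Fintype G] {p : ℕ} [Fact p.Prime]

theorem det_sum_smul_sub_pow_sum_mem_maximalIdeal [Finite (ResidueField R)]
    [CharP (ResidueField R) p] (T : G →* Matrix ι ι R) (hG : IsPGroup p G) (c : G → R) :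
    (∑ g, c g • T g).det - (∑ g, c g) ^ Fintype.card ι ∈ maximalIdeal R := by
  let B : G →* Matrix ι ι (ResidueField R) := (residue R).mapMatrix.toMonoidHom.comp T
  have hB : ∀ g, (residue R).mapMatrix (c g • T g) = residue R (c g) • B g := fun g => by
    ext
    simp [B]
  rw [← ker_residue, RingHom.mem_ker, map_sub, sub_eq_zero, RingHom.map_det, map_pow, map_sum,
    map_sum]
  simp only [hB]
  exact Matrix.det_sum_smul_eq_pow_sum B hG (residue R ∘ c)

end IsLocalRing

theorem det_sum_smul_rep_congr_pow_sum_mod_maximalIdeal_general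
    (p n : ℕ) [Fact p.Prime] (F : Type) [Field F]
    [Algebra ℤ_[p] F]
    [IsLocalRing (integralClosure ℤ_[p] F)]
    (hres : Nat.card (IsLocalRing.ResidueField (integralClosure ℤ_[p] F)) = p)
    (Γ : Type) [Group Γ] [Fintype Γ] (hΓ : IsPGroup p Γ)
    (T : Γ →* GL (Fin n) (integralClosure ℤ_[p] F))
    (c : Γ → integralClosure ℤ_[p] F) :
    (∑ γ : Γ, c γ • (T γ : Matrix (Fin n) (Fin n) (integralClosure ℤ_[p] F))).det -
        (∑ γ : Γ, c γ) ^ n ∈ IsLocalRing.maximalIdeal (integralClosure ℤ_[p] F) := by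
  have : Finite (IsLocalRing.ResidueField (integralClosure ℤ_[p] F)) :=
    Nat.finite_of_card_ne_zero (by rw [hres]; exact (Fact.out : p.Prime).ne_zero)
  have := Fintype.ofFinite (IsLocalRing.ResidueField (integralClosure ℤ_[p] F))
  have : CharP (IsLocalRing.ResidueField (integralClosure ℤ_[p] F)) p :=
    charP_of_card_eq_prime (by rw [← Nat.card_eq_fintype_card, hres])
  simpa using IsLocalRing.det_sum_smul_sub_pow_sum_mem_maximalIdeal ((Units.coeHom _).comp T) hΓ c

/-- Let `F` be a finite extension of `ℚ_p` whose residue field has exactly `p`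
elements, with valuation ring `O` (the integral closure of `ℤ_p` in `F`) and maximal ideal `𝔭`.
For a finite `p`-group `Γ`, a representation `T : Γ → GL_n(O)` and any `c : Γ → O`, one has
`det(∑_γ c(γ) T(γ)) ≡ (∑_γ c(γ))^n (mod 𝔭)`. -/
theorem det_sum_smul_rep_congr_pow_sum_mod_maximalIdeal
    (p n : ℕ) [Fact p.Prime] (F : Type) [Field F]
    [Algebra ℚ_[p] F] [FiniteDimensional ℚ_[p] F]
    [Algebra ℤ_[p] F] [IsScalarTower ℤ_[p] ℚ_[p] F]
    [IsLocalRing (integralClosure ℤ_[p] F)]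
    (hres : Nat.card (IsLocalRing.ResidueField (integralClosure ℤ_[p] F)) = p)
    (Γ : Type) [Group Γ] [Fintype Γ] (hΓ : IsPGroup p Γ)
    (T : Γ →* GL (Fin n) (integralClosure ℤ_[p] F))
    (c : Γ → integralClosure ℤ_[p] F) :
    (∑ γ : Γ, c γ • (T γ : Matrix (Fin n) (Fin n) (integralClosure ℤ_[p] F))).det -
        (∑ γ : Γ, c γ) ^ n ∈ IsLocalRing.maximalIdeal (integralClosure ℤ_[p] F) :=
  det_sum_smul_rep_congr_pow_sum_mod_maximalIdeal_general p n F hres Γ hΓ T c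
end
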